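/- arXiv:1211.4817 — 4 statements merged into one kernel-verified Lean document; each statement's English description precedes it below -/
import Mathlib

section
/- Let α ∈ (1,2) and let Γ_i = E_1 + ⋯ + E_i be the partial sums of i.i.d. standard exponential random variables (the points of a unit-rate homogeneous Poisson process on [0,∞)). Then the random series ∑_{i=1}^∞ |Γ_i^{-1/α} - i^{-1/α}| converges almost surely. -/
/-!
Write `p = 1/α ∈ (1/2, 1)` and fix `b` with `1/2 < b < p`. Chernoff's bound with the moment
generating function `(1 - t)⁻¹` of the standard exponential law gives
`P(|Γ_m - m| ≥ m^b) ≤ 2 exp(-m^(2b-1)/8)`, which is summable, so by Borel–Cantelli almost surely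
`|Γ_m - m| ≤ m^b` for all large `m`. On that event the mean value theorem bounds the `m`-th term
by a constant times `m^(b-p-1)`, and `b - p - 1 < -1`.
-/

open MeasureTheory ProbabilityTheory Filter Set Real Asymptotics
open scoped ENNReal

lemma map_eq_expMeasure_of_measure_gt {Ω : Type*} [MeasurableSpace Ω] {μ : Measure Ω}
    [IsProbabilityMeasure μ] {X : Ω → ℝ} (hX : Measurable X)
    (htail : ∀ t : ℝ, 0 ≤ t → μ {ω | X ω > t} = ENNReal.ofReal (exp (-t))) :
    μ.map X = expMeasure 1 := by
  have := isProbabilityMeasure_expMeasure one_pos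
  have := Measure.isProbabilityMeasure_map (μ := μ) hX.aemeasurable
  refine Measure.eq_of_cdf _ _ (StieltjesFunction.ext fun a => ?_)
  have hgt : MeasurableSet {ω | X ω > a} := measurableSet_lt measurable_const hX
  have hIic : X ⁻¹' Iic a = {ω | X ω > a}ᶜ := by ext ω; simp
  rw [cdf_eq_real, map_measureReal_apply hX measurableSet_Iic, hIic, measureReal_compl hgt,
    cdf_expMeasure_eq one_pos, one_mul, probReal_univ]
  split_ifs with ha
  · rw [measureReal_def, htail a ha, ENNReal.toReal_ofReal (exp_pos _).le]
  · have : {ω | X ω > 0} ⊆ {ω | X ω > a} := fun ω hω => (not_le.mp ha).trans hω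
    have h1 : μ {ω | X ω > a} = 1 :=
      le_antisymm prob_le_one (by simpa [htail 0 le_rfl] using measure_mono (μ := μ) this)
    simp [measureReal_def, h1]

lemma expMeasure_one_eq_withDensity :
    expMeasure 1 = volume.withDensity fun x => ((exponentialPDFReal 1 x).toNNReal : ℝ≥0∞) := rfl

lemma toNNReal_exponentialPDFReal_one_smul_exp_mul (t x : ℝ) :
    (exponentialPDFReal 1 x).toNNReal • exp (t * x)
      = (Ici 0).indicator (fun x => exp ((t - 1) * x)) x := by
  rw [NNReal.smul_def, Real.coe_toNNReal _ (exponentialPDFReal_nonneg one_pos x), smul_eq_mul,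
    exponentialPDFReal, gammaPDFReal, indicator_apply]
  by_cases hx : 0 ≤ x
  · rw [if_pos hx, if_pos (mem_Ici.mpr hx), Gamma_one, sub_self, rpow_zero, rpow_one, div_one,
      mul_one, one_mul, one_mul, ← exp_add]
    ring_nf
  · rw [if_neg hx, if_neg (by simpa using hx), zero_mul]

lemma integrable_exp_mul_expMeasure {t : ℝ} (ht : t < 1) :
    Integrable (fun x => exp (t * x)) (expMeasure 1) := by
  rw [expMeasure_one_eq_withDensity,
    integrable_withDensity_iff_integrable_smul (measurable_exponentialPDFReal 1).real_toNNReal]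
  simp_rw [toNNReal_exponentialPDFReal_one_smul_exp_mul]
  rw [integrable_indicator_iff measurableSet_Ici, integrableOn_Ici_iff_integrableOn_Ioi]
  exact integrableOn_exp_mul_Ioi (by linarith) 0

lemma integral_exp_mul_expMeasure {t : ℝ} (ht : t < 1) :
    ∫ x, exp (t * x) ∂expMeasure 1 = (1 - t)⁻¹ := by
  rw [expMeasure_one_eq_withDensity,
    integral_withDensity_eq_integral_smul (measurable_exponentialPDFReal 1).real_toNNReal]
  simp_rw [toNNReal_exponentialPDFReal_one_smul_exp_mul]
  rw [integral_indicator measurableSet_Ici, integral_Ici_eq_integral_Ioi,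
    integral_exp_mul_Ioi (by linarith), mul_zero, exp_zero, ← neg_sub, div_neg, neg_div, neg_neg,
    one_div]

section ExponentialLaw

variable {Ω : Type*} [MeasurableSpace Ω] {μ : Measure Ω} {X : Ω → ℝ}

lemma integrable_exp_mul_of_map_eq_expMeasure (hX : Measurable X)
    (hlaw : μ.map X = expMeasure 1) {t : ℝ} (ht : t < 1) :
    Integrable (fun ω => exp (t * X ω)) μ := by
  have h := integrable_exp_mul_expMeasure ht
  rw [← hlaw, integrable_map_measure (by fun_prop) hX.aemeasurable] at h
  exact h

lemma mgf_of_map_eq_expMeasure (hX : Measurable X) (hlaw : μ.map X = expMeasure 1) {t : ℝ}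
    (ht : t < 1) : mgf X μ t = (1 - t)⁻¹ := by
  rw [← mgf_id_map hX.aemeasurable, hlaw, mgf, ← integral_exp_mul_expMeasure ht]
  rfl

end ExponentialLaw

lemma inv_one_sub_le_exp_add_two_mul_sq {u : ℝ} (hu : u ≤ 1 / 2) :
    (1 - u)⁻¹ ≤ exp (u + 2 * u ^ 2) := by
  rw [inv_le_iff_one_le_mul₀ (by linarith)]
  have hexp := add_one_le_exp (u + 2 * u ^ 2)
  nlinarith [sq_nonneg u, mul_le_mul_of_nonneg_left hexp (by linarith : (0 : ℝ) ≤ 1 - u)]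

section Chernoff

open Finset

variable {Ω ι : Type*} [MeasurableSpace Ω] {μ : Measure Ω} {X : ι → Ω → ℝ}

lemma mgf_sum_le_of_map_eq_expMeasure (hmeas : ∀ i, Measurable (X i)) (hindep : iIndepFun X μ)
    (hlaw : ∀ i, μ.map (X i) = expMeasure 1) (s : Finset ι) {u : ℝ} (hu : u ≤ 1 / 2) :
    mgf (∑ i ∈ s, X i) μ u ≤ exp (#s * (u + 2 * u ^ 2)) := by
  rw [hindep.mgf_sum hmeas, prod_congr rfl fun i _ => mgf_of_map_eq_expMeasure (hmeas i) (hlaw i)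
    (by linarith), prod_const, exp_nat_mul]
  exact pow_le_pow_left₀ (inv_nonneg.mpr (by linarith)) (inv_one_sub_le_exp_add_two_mul_sq hu) _

lemma integrable_exp_mul_sum_of_map_eq_expMeasure [IsFiniteMeasure μ]
    (hmeas : ∀ i, Measurable (X i)) (hindep : iIndepFun X μ)
    (hlaw : ∀ i, μ.map (X i) = expMeasure 1) (s : Finset ι) {u : ℝ} (hu : u < 1) :
    Integrable (fun ω => exp (u * (∑ i ∈ s, X i) ω)) μ :=
  hindep.integrable_exp_mul_sum hmeas fun i _ =>
    integrable_exp_mul_of_map_eq_expMeasure (hmeas i) (hlaw i) hu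

lemma chernoff_exponent_eq {m a t : ℝ} (hm : 0 < m) (ht : t = a / (4 * m)) :
    -t * a + 2 * m * t ^ 2 = -(a ^ 2 / (8 * m)) := by
  subst ht
  field_simp
  ring

lemma measureReal_add_le_sum_le [IsFiniteMeasure μ] (hmeas : ∀ i, Measurable (X i))
    (hindep : iIndepFun X μ) (hlaw : ∀ i, μ.map (X i) = expMeasure 1) {s : Finset ι}
    (hs : s.Nonempty) {a : ℝ} (ha : 0 ≤ a) (has : a ≤ 2 * #s) :
    μ.real {ω | #s + a ≤ (∑ i ∈ s, X i) ω} ≤ exp (-(a ^ 2 / (8 * #s))) := by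
  have hm : (0 : ℝ) < #s := by exact_mod_cast hs.card_pos
  set t := a / (4 * #s)
  have ht : t ≤ 1 / 2 := by rw [div_le_iff₀ (by positivity)]; linarith
  calc μ.real {ω | #s + a ≤ (∑ i ∈ s, X i) ω}
      ≤ exp (-t * (#s + a)) * mgf (∑ i ∈ s, X i) μ t :=
        measure_ge_le_exp_mul_mgf _ (by positivity)
          (integrable_exp_mul_sum_of_map_eq_expMeasure hmeas hindep hlaw s (by linarith))
    _ ≤ exp (-t * (#s + a)) * exp (#s * (t + 2 * t ^ 2)) := by
        gcongr; exact mgf_sum_le_of_map_eq_expMeasure hmeas hindep hlaw s ht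
    _ = exp (-(a ^ 2 / (8 * #s))) := by
        rw [← exp_add, ← chernoff_exponent_eq (t := t) hm rfl]
        congr 1
        ring

lemma measureReal_sum_le_sub_le [IsFiniteMeasure μ] (hmeas : ∀ i, Measurable (X i))
    (hindep : iIndepFun X μ) (hlaw : ∀ i, μ.map (X i) = expMeasure 1) {s : Finset ι}
    (hs : s.Nonempty) {a : ℝ} (ha : 0 ≤ a) :
    μ.real {ω | (∑ i ∈ s, X i) ω ≤ #s - a} ≤ exp (-(a ^ 2 / (8 * #s))) := by
  have hm : (0 : ℝ) < #s := by exact_mod_cast hs.card_pos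
  set t := a / (4 * #s)
  have ht : 0 ≤ t := by positivity
  calc μ.real {ω | (∑ i ∈ s, X i) ω ≤ #s - a}
      ≤ exp (- -t * (#s - a)) * mgf (∑ i ∈ s, X i) μ (-t) :=
        measure_le_le_exp_mul_mgf _ (by linarith)
          (integrable_exp_mul_sum_of_map_eq_expMeasure hmeas hindep hlaw s (by linarith))
    _ ≤ exp (- -t * (#s - a)) * exp (#s * (-t + 2 * (-t) ^ 2)) := by
        gcongr; exact mgf_sum_le_of_map_eq_expMeasure hmeas hindep hlaw s (by linarith)
    _ = exp (-(a ^ 2 / (8 * #s))) := by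
        rw [← exp_add, ← chernoff_exponent_eq (t := t) hm rfl]
        congr 1
        ring

lemma measure_le_abs_sum_sub_card_le [IsFiniteMeasure μ] (hmeas : ∀ i, Measurable (X i))
    (hindep : iIndepFun X μ) (hlaw : ∀ i, μ.map (X i) = expMeasure 1) {s : Finset ι}
    (hs : s.Nonempty) {a : ℝ} (ha : 0 ≤ a) (has : a ≤ 2 * #s) :
    μ {ω | a ≤ |(∑ i ∈ s, X i) ω - #s|} ≤ ENNReal.ofReal (2 * exp (-(a ^ 2 / (8 * #s)))) := by
  have hsplit : {ω | a ≤ |(∑ i ∈ s, X i) ω - #s|}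
      ⊆ {ω | #s + a ≤ (∑ i ∈ s, X i) ω} ∪ {ω | (∑ i ∈ s, X i) ω ≤ #s - a} := by
    intro ω hω
    simp only [mem_union, mem_ofPred_eq] at hω ⊢
    rcases le_abs.mp hω with h | h
    · left; linarith
    · right; linarith
  rw [← ENNReal.ofReal_toReal (measure_ne_top μ _)]
  refine ENNReal.ofReal_le_ofReal ?_
  calc μ.real {ω | a ≤ |(∑ i ∈ s, X i) ω - #s|}
      ≤ μ.real {ω | #s + a ≤ (∑ i ∈ s, X i) ω} + μ.real {ω | (∑ i ∈ s, X i) ω ≤ #s - a} :=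
        (measureReal_mono hsplit).trans (measureReal_union_le _ _)
    _ ≤ 2 * exp (-(a ^ 2 / (8 * #s))) := by
        linarith [measureReal_add_le_sum_le hmeas hindep hlaw hs ha has,
          measureReal_sum_le_sub_le hmeas hindep hlaw hs ha]

end Chernoff

lemma summable_nat_add_one_rpow {q : ℝ} (hq : q < -1) :
    Summable fun n : ℕ => ((n : ℝ) + 1) ^ q := by
  simpa using (summable_nat_add_iff 1).mpr (Real.summable_nat_rpow.mpr hq)

lemma tendsto_natCast_add_one_atTop : Tendsto (fun n : ℕ => (n : ℝ) + 1) atTop atTop :=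
  tendsto_atTop_add_const_right _ _ tendsto_natCast_atTop_atTop

lemma summable_exp_neg_mul_rpow {c δ : ℝ} (hc : 0 < c) (hδ : 0 < δ) :
    Summable fun n : ℕ => exp (-(c * ((n : ℝ) + 1) ^ δ)) := by
  refine summable_of_isBigO_nat (summable_nat_add_one_rpow (by norm_num : (-2 : ℝ) < -1))
    (IsBigO.of_bound 1 ?_)
  have hlog : ∀ᶠ x : ℝ in atTop, log x ≤ c / 2 * x ^ δ := by
    filter_upwards [(isLittleO_log_rpow_atTop hδ).bound (half_pos hc), eventually_ge_atTop 0]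
      with x hx hx0
    simpa [abs_of_nonneg (rpow_nonneg hx0 δ)] using (le_abs_self _).trans hx
  filter_upwards [tendsto_natCast_add_one_atTop.eventually hlog] with n hn
  have hpos : (0 : ℝ) < n + 1 := by positivity
  rw [one_mul, norm_of_nonneg (exp_pos _).le, norm_of_nonneg (rpow_nonneg hpos.le _),
    ← exp_log (rpow_pos_of_pos hpos (-2 : ℝ)), exp_le_exp, log_rpow hpos]
  nlinarith [rpow_nonneg hpos.le δ]

open Finset in
lemma ae_eventually_abs_sum_range_sub_le_rpow {Ω : Type*} [MeasurableSpace Ω] {μ : Measure Ω}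
    [IsProbabilityMeasure μ] {X : ℕ → Ω → ℝ} (hmeas : ∀ i, Measurable (X i))
    (hindep : iIndepFun X μ) (hlaw : ∀ i, μ.map (X i) = expMeasure 1) {b : ℝ}
    (hb1 : 1 / 2 < b) (hb2 : b ≤ 1) :
    ∀ᵐ ω ∂μ, ∀ᶠ n in atTop, |∑ k ∈ range (n + 1), X k ω - ((n : ℝ) + 1)| ≤ ((n : ℝ) + 1) ^ b := by
  have hbound (n : ℕ) :
      μ {ω | ((n : ℝ) + 1) ^ b ≤ |(∑ k ∈ range (n + 1), X k) ω - #(range (n + 1))|}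
        ≤ ENNReal.ofReal (2 * exp (-(1 / 8 * ((n : ℝ) + 1) ^ (2 * b - 1)))) := by
    have hpos : (0 : ℝ) < n + 1 := by positivity
    have hratio :
        (((n : ℝ) + 1) ^ b) ^ 2 / (8 * (n + 1)) = 1 / 8 * ((n : ℝ) + 1) ^ (2 * b - 1) := by
      rw [← rpow_natCast, ← rpow_mul hpos.le, rpow_sub hpos, rpow_one]
      field_simp
      norm_num
    have h := measure_le_abs_sum_sub_card_le hmeas hindep hlaw (nonempty_range_add_one (n := n))
      (a := ((n : ℝ) + 1) ^ b) (by positivity) ?_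
    · simpa [hratio] using h
    · have := rpow_le_rpow_of_exponent_le (by linarith : (1 : ℝ) ≤ n + 1) hb2
      rw [rpow_one] at this
      simp only [card_range, Nat.cast_add, Nat.cast_one]
      linarith
  have hsum := (summable_exp_neg_mul_rpow (c := 1 / 8) (δ := 2 * b - 1) (by norm_num)
    (by linarith)).mul_left 2
  have hfin := ENNReal.tsum_le_tsum hbound
  rw [← ENNReal.ofReal_tsum_of_nonneg (fun n => by positivity) hsum] at hfin
  filter_upwards [ae_eventually_notMem (hfin.trans_lt ENNReal.ofReal_lt_top).ne] with ω hω
  filter_upwards [hω] with n hn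
  simpa [Finset.sum_apply] using (not_le.mp hn).le

lemma abs_rpow_neg_sub_rpow_neg_le {p a x : ℝ} (hp : 0 < p) (ha : 0 < a) (hx : a / 2 ≤ x) :
    |x ^ (-p) - a ^ (-p)| ≤ p * (a / 2) ^ (-p - 1) * |x - a| := by
  have ha2 : 0 < a / 2 := half_pos ha
  refine (convex_Ici (a / 2)).norm_image_sub_le_of_norm_hasDerivWithin_le
    (f := fun z => z ^ (-p)) (f' := fun z => -p * z ^ (-p - 1)) (fun z hz => ?_) (fun z hz => ?_)
    (show a / 2 ≤ a by linarith) hx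
  · exact (hasDerivAt_rpow_const (Or.inl (ha2.trans_le hz).ne')).hasDerivWithinAt
  · rw [norm_mul, norm_neg, norm_of_nonneg hp.le, norm_of_nonneg (rpow_nonneg (ha2.le.trans hz) _)]
    exact mul_le_mul_of_nonneg_left (rpow_le_rpow_of_nonpos ha2 hz (by linarith)) hp.le

lemma abs_rpow_neg_sub_le_of_abs_sub_le_rpow {p b a x : ℝ} (hp : 0 < p) (ha : 0 < a)
    (hab : a ^ b ≤ a / 2) (hx : |x - a| ≤ a ^ b) :
    |x ^ (-p) - a ^ (-p)| ≤ p * 2 ^ (p + 1) * a ^ (b - p - 1) := by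
  have hxa : a / 2 ≤ x := by linarith [(abs_le.mp (hx.trans hab)).1]
  calc |x ^ (-p) - a ^ (-p)| ≤ p * (a / 2) ^ (-p - 1) * |x - a| :=
        abs_rpow_neg_sub_rpow_neg_le hp ha hxa
    _ ≤ p * (a / 2) ^ (-p - 1) * a ^ b := by gcongr
    _ = p * 2 ^ (p + 1) * a ^ (b - p - 1) := by
        rw [div_rpow ha.le zero_le_two, show -p - 1 = -(p + 1) by ring, rpow_neg zero_le_two,
          div_inv_eq_mul, show b - p - 1 = -(p + 1) + b by ring, rpow_add ha]
        ring

lemma summable_abs_rpow_neg_sub_of_abs_sub_le_rpow {p b : ℝ} {x : ℕ → ℝ} (hp : 0 < p)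
    (hbp : b < p) (hb : b < 1) (hx : ∀ᶠ n : ℕ in atTop, |x n - (n + 1)| ≤ ((n : ℝ) + 1) ^ b) :
    Summable fun n => |x n ^ (-p) - ((n : ℝ) + 1) ^ (-p)| := by
  refine summable_of_isBigO_nat (summable_nat_add_one_rpow (q := b - p - 1) (by linarith))
    (IsBigO.of_bound (p * 2 ^ (p + 1)) ?_)
  have hsmall : ∀ᶠ a : ℝ in atTop, a ^ b ≤ a / 2 := by
    filter_upwards [(tendsto_rpow_atTop (sub_pos.mpr hb)).eventually_ge_atTop 2,
      eventually_gt_atTop 0] with a ha ha0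
    have := mul_le_mul_of_nonneg_left ha (rpow_nonneg ha0.le b)
    rw [← rpow_add ha0, add_sub_cancel, rpow_one] at this
    linarith
  filter_upwards [hx, tendsto_natCast_add_one_atTop.eventually hsmall] with n hxn hn
  rw [norm_of_nonneg (abs_nonneg _), norm_of_nonneg (by positivity)]
  exact abs_rpow_neg_sub_le_of_abs_sub_le_rpow hp (by positivity) hn hxn

/-- For `α ∈ (1,2)` and `Γ_i = E_1 + ⋯ + E_i` the points of a unit-rate Poisson process
(partial sums of i.i.d. standard exponentials), the series
`∑ |Γ_i ^ (-1/α) - i ^ (-1/α)|` converges almost surely. -/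
theorem stmt1 {Ω : Type*} [MeasurableSpace Ω] (μ : Measure Ω) [IsProbabilityMeasure μ]
    (α : ℝ) (hα1 : 1 < α) (hα2 : α < 2)
    (E : ℕ → Ω → ℝ) (hmeas : ∀ i, Measurable (E i))
    (hindep : iIndepFun E μ)
    (hexp : ∀ i, ∀ t : ℝ, 0 ≤ t → μ {ω | E i ω > t} = ENNReal.ofReal (Real.exp (-t))) :
    ∀ᵐ ω ∂μ,
      Summable (fun i : ℕ =>
        |(∑ k ∈ Finset.range (i + 1), E k ω) ^ (-(1 / α)) - ((i : ℝ) + 1) ^ (-(1 / α))|) := by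
  have hα0 : 0 < α := by linarith
  have hp_gt : 1 / 2 < 1 / α := by rw [div_lt_div_iff₀ two_pos hα0]; linarith
  have hp_lt : 1 / α < 1 := by rw [div_lt_one hα0]; exact hα1
  have hlaw (i : ℕ) : μ.map (E i) = expMeasure 1 :=
    map_eq_expMeasure_of_measure_gt (hmeas i) (hexp i)
  filter_upwards [ae_eventually_abs_sum_range_sub_le_rpow hmeas hindep hlaw
    (b := (1 / 2 + 1 / α) / 2) (by linarith) (by linarith)] with ω hω
  exact summable_abs_rpow_neg_sub_of_abs_sub_le_rpow (by positivity) (by linarith) (by linarith) hω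
end

section
/- Let I be a compact interval, m > 0, and (X_n) a sequence of random elements of D(I) with sup_n ‖X_n‖_∞ ≤ m almost surely, converging weakly in (D(I), J_1 topology) to a random element X with ‖X‖_∞ ≤ m that has no fixed jumps, i.e. P(X is discontinuous at t) = 0 for every t ∈ I. Then the functions E[X_n] : t ↦ E[X_n(t)] and E[X] : t ↦ E[X(t)] are càdlàg, E[X] is continuous on I, and E[X_n] converges uniformly on I to E[X]. -/
open MeasureTheory ProbabilityTheory Filter Set

/-- `x : ℝ → ℝ` is càdlàg on the compact interval `[a,b]`: right-continuous on `[a,b)` and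
with left limits on `(a,b]`. -/
def CadlagOn (a b : ℝ) (x : ℝ → ℝ) : Prop :=
  (∀ t ∈ Set.Ico a b, Filter.Tendsto x (nhdsWithin t (Set.Ioi t)) (nhds (x t))) ∧
  (∀ t ∈ Set.Ioc a b, ∃ L : ℝ, Filter.Tendsto x (nhdsWithin t (Set.Iio t)) (nhds L))

/-- A time change of `[a,b]`: a continuous, strictly increasing map of `[a,b]` onto itself. -/
def TimeChange (a b : ℝ) (l : ℝ → ℝ) : Prop :=
  ContinuousOn l (Set.Icc a b) ∧ StrictMonoOn l (Set.Icc a b) ∧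
    l a = a ∧ l b = b ∧ Set.MapsTo l (Set.Icc a b) (Set.Icc a b)

/-- Skorokhod's `J_1` distance on `D([a,b])`. -/
noncomputable def J1dist (a b : ℝ) (x y : ℝ → ℝ) : ℝ :=
  sInf { r : ℝ | 0 ≤ r ∧ ∃ l : ℝ → ℝ, TimeChange a b l ∧
    ∀ t ∈ Set.Icc a b, |l t - t| ≤ r ∧ |x t - y (l t)| ≤ r }

/-- Continuity of a functional `F : D([a,b]) → ℝ` at `x` with respect to the `J_1` distance. -/
def J1ContinuousAt (a b : ℝ) (F : (ℝ → ℝ) → ℝ) (x : ℝ → ℝ) : Prop :=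
  ∀ ε : ℝ, 0 < ε → ∃ δ : ℝ, 0 < δ ∧ ∀ y : ℝ → ℝ, CadlagOn a b y →
    J1dist a b x y < δ → |F y - F x| < ε

/-- Weak convergence of `D([a,b])`-valued random elements in the `J_1` topology: convergence
of expectations of bounded `J_1`-continuous functionals. -/
def WeakConvJ1 {Ω : Type*} [MeasurableSpace Ω] (μ : Measure Ω) (a b : ℝ)
    (X : ℕ → Ω → ℝ → ℝ) (X₀ : Ω → ℝ → ℝ) : Prop :=
  ∀ F : (ℝ → ℝ) → ℝ, (∃ C : ℝ, ∀ x, |F x| ≤ C) →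
    (∀ x, CadlagOn a b x → J1ContinuousAt a b F x) →
    Tendsto (fun n => ∫ ω, F (X n ω) ∂μ) atTop (nhds (∫ ω, F (X₀ ω) ∂μ))

/-- The set of discontinuity points (within `[a,b]`) of a function `x`. -/
def DiscOn (a b : ℝ) (x : ℝ → ℝ) : Set ℝ :=
  {t | t ∈ Set.Icc a b ∧ ¬ ContinuousWithinAt x (Set.Icc a b) t}

/-!
For `k ∈ ℕ`, the sup-convolution `U_k(t, x) = sup_{s ∈ [a,b]} (x̄ s - k |s - t|)` of the path `x`
truncated at level `m` is a bounded `J_1`-continuous functional of `x`, is `k`-Lipschitz in `t`,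
dominates `x t` when `|x| ≤ m`, and decreases to `x t` as `k → ∞` when `x` is continuous at `t`.
Hence `𝔼 U_k(t, X_n) → 𝔼 U_k(t, X₀)` for each `t`, uniformly in `t` by equi-Lipschitz continuity;
and, since `X₀` has no fixed jumps, `𝔼 U_k(·, X₀)` decreases to the continuous function `𝔼 X₀`,
uniformly by Dini's theorem. Together, `𝔼 X_n ≤ 𝔼 X₀ + ε` on `[a,b]` for large `n`, and the lower
bound is the same statement for `-X_n → -X₀`.
-/

lemma csSup_image_le_csSup_image_add {α β : Type*} {S : Set α} {S' : Set β} {f : α → ℝ}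
    {g : β → ℝ} {c : ℝ} (hS : S.Nonempty) (hg : BddAbove (g '' S'))
    (h : ∀ s ∈ S, ∃ s' ∈ S', f s ≤ g s' + c) :
    sSup (f '' S) ≤ sSup (g '' S') + c := by
  refine csSup_le (hS.image f) ?_
  rintro _ ⟨s, hs, rfl⟩
  obtain ⟨s', hs', hfg⟩ := h s hs
  exact hfg.trans (add_le_add_left (le_csSup hg (mem_image_of_mem g hs')) c)

lemma csSup_image_Icc_inter_dense {a b : ℝ} {f : ℝ → ℝ} {T : Set ℝ} (hT : Dense T) (hbT : b ∈ T)
    (hab : a ≤ b) (hf : ∀ s ∈ Ico a b, Tendsto f (nhdsWithin s (Ioi s)) (nhds (f s)))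
    (hbdd : BddAbove (f '' Icc a b)) :
    sSup (f '' (Icc a b ∩ T)) = sSup (f '' Icc a b) := by
  have hbdd' : BddAbove (f '' (Icc a b ∩ T)) := hbdd.mono (image_mono inter_subset_left)
  refine le_antisymm (csSup_le_csSup hbdd ⟨f b, b, ⟨right_mem_Icc.2 hab, hbT⟩, rfl⟩
    (image_mono inter_subset_left)) (csSup_le ((nonempty_Icc.2 hab).image f) ?_)
  rintro _ ⟨s, hs, rfl⟩
  rcases eq_or_lt_of_le hs.2 with rfl | hsb
  · exact le_csSup hbdd' (mem_image_of_mem f ⟨hs, hbT⟩)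
  -- `f s` is a limit from the right of values of `f` on `T`
  have hs_mem : s ∈ closure (Ioo s b ∩ T) :=
    closure_minimal (hT.open_subset_closure_inter isOpen_Ioo) isClosed_closure
      (by rw [closure_Ioo hsb.ne]; exact left_mem_Icc.2 hsb.le)
  have := mem_closure_iff_nhdsWithin_neBot.1 hs_mem
  refine le_of_tendsto ((hf s ⟨hs.1, hsb⟩).mono_left
      (nhdsWithin_mono _ fun u (hu : u ∈ Ioo s b ∩ T) => hu.1.1))
    (eventually_nhdsWithin_of_forall fun u (hu : u ∈ Ioo s b ∩ T) => le_csSup hbdd'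
      (mem_image_of_mem f ⟨⟨hs.1.trans hu.1.1.le, hu.1.2.le⟩, hu.2⟩))

lemma EquicontinuousOn.tendstoUniformlyOn_of_tendsto {ι X α : Type*} [TopologicalSpace X]
    [UniformSpace α] {l : Filter ι} {F : ι → X → α} {f : X → α} {s : Set X}
    (hs : IsCompact s) (hF : EquicontinuousOn F s)
    (h : ∀ x ∈ s, Tendsto (F · x) l (nhds (f x))) : TendstoUniformlyOn F f l s := by
  have := (EquicontinuousOn.tendsto_uniformOnFun_iff_pi' (𝔖 := {s}) (by simpa) (by simpa) l f).2
    (tendsto_pi_nhds.2 fun x => by simpa using h x (by simpa using x.2))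
  rw [UniformOnFun.tendsto_iff_tendstoUniformlyOn] at this
  exact this s rfl

section Integral

variable {Ω : Type*} [MeasurableSpace Ω] {μ : Measure Ω} {a b m : ℝ} {Y : Ω → ℝ → ℝ}

lemma lipschitzWith_integral [IsProbabilityMeasure μ] {K : NNReal} {F : Ω → ℝ → ℝ}
    (hF : ∀ ω, LipschitzWith K (F ω)) (hint : ∀ t, Integrable (fun ω => F ω t) μ) :
    LipschitzWith K fun t => ∫ ω, F ω t ∂μ := by
  refine LipschitzWith.of_dist_le_mul fun t t' => ?_
  rw [dist_eq_norm, ← integral_sub (hint t) (hint t')]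
  have hbound : ∀ᵐ ω ∂μ, ‖F ω t - F ω t'‖ ≤ K * dist t t' :=
    Eventually.of_forall fun ω => by rw [← dist_eq_norm]; exact (hF ω).dist_le_mul t t'
  simpa using norm_integral_le_of_norm_le_const hbound

lemma tendsto_integral_of_ae_tendsto [IsFiniteMeasure μ] {S : Set ℝ} {l : Filter ℝ}
    [l.IsCountablyGenerated] (hS : S ∈ l) (hY : ∀ s, Measurable fun ω => Y ω s)
    (hbd : ∀ᵐ ω ∂μ, ∀ s ∈ S, |Y ω s| ≤ m) {g : Ω → ℝ}
    (hg : ∀ᵐ ω ∂μ, Tendsto (Y ω) l (nhds (g ω))) :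
    Tendsto (fun s => ∫ ω, Y ω s ∂μ) l (nhds (∫ ω, g ω ∂μ)) := by
  refine tendsto_integral_filter_of_dominated_convergence (fun _ => m)
    (Eventually.of_forall fun s => (hY s).aestronglyMeasurable) ?_ (integrable_const m) hg
  filter_upwards [hS] with s hs
  filter_upwards [hbd] with ω hω
  exact hω s hs

lemma cadlagOn_integral [IsFiniteMeasure μ] (hY : ∀ s, Measurable fun ω => Y ω s)
    (hcad : ∀ᵐ ω ∂μ, CadlagOn a b (Y ω)) (hbd : ∀ᵐ ω ∂μ, ∀ s ∈ Icc a b, |Y ω s| ≤ m) :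
    CadlagOn a b fun t => ∫ ω, Y ω t ∂μ := by
  refine ⟨fun t ht => ?_, fun t ht => ⟨∫ ω, limUnder (nhdsWithin t (Iio t)) (Y ω) ∂μ, ?_⟩⟩
  · exact tendsto_integral_of_ae_tendsto (S := Icc a b) (mem_of_superset (Ioo_mem_nhdsGT ht.2)
      fun s hs => ⟨ht.1.trans hs.1.le, hs.2.le⟩) hY hbd (hcad.mono fun ω hω => hω.1 t ht)
  · exact tendsto_integral_of_ae_tendsto (S := Icc a b) (mem_of_superset (Ioo_mem_nhdsLT ht.1)
      fun s hs => ⟨hs.1.le, hs.2.le.trans ht.2⟩) hY hbd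
      (hcad.mono fun ω hω => tendsto_nhds_limUnder (hω.2 t ht))

lemma continuousOn_integral [IsFiniteMeasure μ] (hY : ∀ s, Measurable fun ω => Y ω s)
    (hbd : ∀ᵐ ω ∂μ, ∀ s ∈ Icc a b, |Y ω s| ≤ m)
    (hcont : ∀ t ∈ Icc a b, ∀ᵐ ω ∂μ, ContinuousWithinAt (Y ω) (Icc a b) t) :
    ContinuousOn (fun t => ∫ ω, Y ω t ∂μ) (Icc a b) := fun t ht =>
  tendsto_integral_of_ae_tendsto self_mem_nhdsWithin hY hbd (hcont t ht)

end Integral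

section Skorokhod

variable {a b t : ℝ} {x y : ℝ → ℝ}

lemma CadlagOn.eventually_abs_le (hy : CadlagOn a b y) (ht : t ∈ Icc a b) :
    ∃ C, ∀ᶠ s in nhdsWithin t (Icc a b), |y s| ≤ C := by
  have left : ∃ C, ∀ᶠ s in nhds t, s < t → s ∈ Icc a b → |y s| ≤ C := by
    rcases eq_or_lt_of_le ht.1 with rfl | hat
    · exact ⟨0, Eventually.of_forall fun s hst hs => absurd hs.1 (not_le.2 hst)⟩
    · obtain ⟨L, hL⟩ := hy.2 t ⟨hat, ht.2⟩
      exact ⟨|L| + 1, (eventually_nhdsWithin_iff.1 (hL.abs.eventually_lt_const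
        (lt_add_one |L|))).mono fun s hs hst _ => (hs hst).le⟩
  have right : ∃ C, ∀ᶠ s in nhds t, t < s → s ∈ Icc a b → |y s| ≤ C := by
    rcases eq_or_lt_of_le ht.2 with rfl | htb
    · exact ⟨0, Eventually.of_forall fun s hts hs => absurd hs.2 (not_le.2 hts)⟩
    · exact ⟨|y t| + 1, (eventually_nhdsWithin_iff.1 ((hy.1 t ⟨ht.1, htb⟩).abs.eventually_lt_const
        (lt_add_one |y t|))).mono fun s hs hts _ => (hs hts).le⟩
  obtain ⟨C₁, h₁⟩ := left
  obtain ⟨C₂, h₂⟩ := right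
  refine ⟨max |y t| (max C₁ C₂), eventually_nhdsWithin_iff.2 ?_⟩
  filter_upwards [h₁, h₂] with s hs₁ hs₂ hs
  rcases lt_trichotomy s t with hst | rfl | hts
  · exact le_max_of_le_right (le_max_of_le_left (hs₁ hst hs))
  · exact le_max_left _ _
  · exact le_max_of_le_right (le_max_of_le_right (hs₂ hts hs))

lemma CadlagOn.exists_bound (hy : CadlagOn a b y) : ∃ C, ∀ t ∈ Icc a b, |y t| ≤ C := by
  refine isCompact_Icc.induction_on (p := fun S => ∃ C, ∀ t ∈ S, |y t| ≤ C) ⟨0, by simp⟩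
    (fun S T hST ⟨C, hC⟩ => ⟨C, fun t ht => hC t (hST ht)⟩)
    (fun S T ⟨C, hC⟩ ⟨D, hD⟩ => ⟨max C D, fun t ht => ht.elim
      (fun ht => le_max_of_le_left (hC t ht)) (fun ht => le_max_of_le_right (hD t ht))⟩)
    fun t ht => ?_
  obtain ⟨C, hC⟩ := hy.eventually_abs_le ht
  exact ⟨_, hC, C, fun s hs => hs⟩

lemma CadlagOn.neg (hx : CadlagOn a b x) : CadlagOn a b fun s => -x s :=
  ⟨fun t ht => (hx.1 t ht).neg, fun t ht => (hx.2 t ht).elim fun L hL => ⟨-L, hL.neg⟩⟩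

lemma TimeChange.id : TimeChange a b id :=
  ⟨continuousOn_id, strictMono_id.strictMonoOn _, rfl, rfl, mapsTo_id _⟩

lemma TimeChange.surjOn {l : ℝ → ℝ} (hab : a ≤ b) (hl : TimeChange a b l) :
    SurjOn l (Icc a b) (Icc a b) := by
  have := intermediate_value_Icc hab hl.1
  rwa [hl.2.2.1, hl.2.2.2.1] at this

lemma exists_timeChange_of_J1dist_lt (hx : CadlagOn a b x) (hy : CadlagOn a b y) {δ : ℝ}
    (h : J1dist a b x y < δ) :
    ∃ r < δ, ∃ l : ℝ → ℝ, TimeChange a b l ∧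
      ∀ t ∈ Icc a b, |l t - t| ≤ r ∧ |x t - y (l t)| ≤ r := by
  obtain ⟨Cx, hCx⟩ := hx.exists_bound
  obtain ⟨Cy, hCy⟩ := hy.exists_bound
  have hne : {r : ℝ | 0 ≤ r ∧ ∃ l : ℝ → ℝ, TimeChange a b l ∧
      ∀ t ∈ Icc a b, |l t - t| ≤ r ∧ |x t - y (l t)| ≤ r}.Nonempty := by
    refine ⟨|Cx| + |Cy|, by positivity, id, TimeChange.id, fun t ht => ⟨by simp; positivity, ?_⟩⟩
    calc |x t - y t| ≤ |x t| + |y t| := abs_sub _ _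
      _ ≤ |Cx| + |Cy| := add_le_add ((hCx t ht).trans (le_abs_self _))
          ((hCy t ht).trans (le_abs_self _))
  obtain ⟨r, ⟨-, hr⟩, hrδ⟩ := exists_lt_of_csInf_lt hne h
  exact ⟨r, hrδ, hr⟩

lemma J1dist_neg : J1dist a b (fun s => -x s) (fun s => -y s) = J1dist a b x y := by
  simp only [J1dist, neg_sub_neg, abs_sub_comm (y _)]

lemma WeakConvJ1.neg {Ω : Type*} [MeasurableSpace Ω] {μ : Measure Ω}
    {X : ℕ → Ω → ℝ → ℝ} {X₀ : Ω → ℝ → ℝ} (h : WeakConvJ1 μ a b X X₀) :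
    WeakConvJ1 μ a b (fun n ω s => -X n ω s) (fun ω s => -X₀ ω s) := by
  rintro F ⟨C, hC⟩ hF
  refine h (fun x => F fun s => -x s) ⟨C, fun x => hC _⟩ fun x hx ε hε => ?_
  obtain ⟨δ, hδ, hFδ⟩ := hF _ hx.neg ε hε
  exact ⟨δ, hδ, fun y hy hxy => hFδ _ hy.neg (by rwa [J1dist_neg])⟩

end Skorokhod

namespace UpperEnvelope

variable {a b m t : ℝ} {k : ℕ} {x y : ℝ → ℝ}

-- Truncation makes the envelope below a bounded functional on all of `ℝ → ℝ`, as `WeakConvJ1`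
-- requires.
noncomputable def clamp (m v : ℝ) : ℝ := max (min v m) (-m)

lemma clamp_le_abs (m v : ℝ) : clamp m v ≤ |m| :=
  max_le ((min_le_right v m).trans (le_abs_self m)) (neg_le_abs m)

lemma neg_abs_le_clamp (m v : ℝ) : -|m| ≤ clamp m v :=
  (neg_le_neg (le_abs_self m)).trans (le_max_right _ _)

lemma clamp_of_abs_le {m v : ℝ} (h : |v| ≤ m) : clamp m v = v := by
  rw [abs_le] at h
  rw [clamp, min_eq_left h.2, max_eq_left h.1]

lemma abs_clamp_sub_clamp_le (m u v : ℝ) : |clamp m u - clamp m v| ≤ |u - v| :=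
  calc |clamp m u - clamp m v| ≤ |min u m - min v m| := abs_max_sub_max_le_abs _ _ _
    _ ≤ max |u - v| |m - m| := abs_min_sub_min_le_max _ _ _ _
    _ = |u - v| := by simp

lemma continuous_clamp (m : ℝ) : Continuous (clamp m) := by
  unfold clamp; fun_prop

noncomputable def upperEnvelope (a b m : ℝ) (k : ℕ) (t : ℝ) (x : ℝ → ℝ) : ℝ :=
  sSup ((fun s => clamp m (x s) - k * |s - t|) '' Icc a b)

lemma bddAbove_upperEnvelope_image :
    BddAbove ((fun s => clamp m (x s) - k * |s - t|) '' Icc a b) := by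
  refine ⟨|m|, ?_⟩
  rintro _ ⟨s, -, rfl⟩
  have := clamp_le_abs m (x s)
  have : 0 ≤ (k : ℝ) * |s - t| := by positivity
  linarith

lemma le_upperEnvelope {s : ℝ} (hs : s ∈ Icc a b) :
    clamp m (x s) - k * |s - t| ≤ upperEnvelope a b m k t x :=
  le_csSup bddAbove_upperEnvelope_image (mem_image_of_mem _ hs)

lemma clamp_le_upperEnvelope (ht : t ∈ Icc a b) : clamp m (x t) ≤ upperEnvelope a b m k t x := by
  simpa using le_upperEnvelope (m := m) (k := k) (x := x) (t := t) ht

lemma upperEnvelope_le_abs : upperEnvelope a b m k t x ≤ |m| := by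
  refine Real.sSup_le ?_ (abs_nonneg m)
  rintro _ ⟨s, -, rfl⟩
  have := clamp_le_abs m (x s)
  have : 0 ≤ (k : ℝ) * |s - t| := by positivity
  linarith

lemma abs_upperEnvelope_le (hab : a ≤ b) :
    |upperEnvelope a b m k t x| ≤ |m| + k * |a - t| := by
  have := le_upperEnvelope (m := m) (k := k) (x := x) (t := t) (left_mem_Icc.2 hab)
  have := neg_abs_le_clamp m (x a)
  have : 0 ≤ (k : ℝ) * |a - t| := by positivity
  have := upperEnvelope_le_abs (a := a) (b := b) (m := m) (k := k) (t := t) (x := x)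
  exact abs_le.2 ⟨by linarith, by linarith⟩

lemma abs_upperEnvelope_le_of_mem (ht : t ∈ Icc a b) : |upperEnvelope a b m k t x| ≤ |m| :=
  abs_le.2 ⟨(neg_abs_le_clamp m (x t)).trans (clamp_le_upperEnvelope ht), upperEnvelope_le_abs⟩

lemma upperEnvelope_le_add (hab : a ≤ b) {t' r ρ : ℝ}
    (h : ∀ s ∈ Icc a b, ∃ s' ∈ Icc a b, |x s - y s'| ≤ r ∧ |(s - t) - (s' - t')| ≤ ρ) :
    upperEnvelope a b m k t x ≤ upperEnvelope a b m k t' y + (r + k * ρ) := by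
  refine csSup_image_le_csSup_image_add (nonempty_Icc.2 hab) bddAbove_upperEnvelope_image
    fun s hs => ?_
  obtain ⟨s', hs', hxy, hst⟩ := h s hs
  refine ⟨s', hs', ?_⟩
  have hclamp := (abs_le.1 ((abs_clamp_sub_clamp_le m (x s) (y s')).trans hxy)).2
  have hdist : |s' - t'| - |s - t| ≤ ρ :=
    (abs_sub_abs_le_abs_sub _ _).trans (by rwa [abs_sub_comm])
  have := mul_le_mul_of_nonneg_left hdist (Nat.cast_nonneg (α := ℝ) k)
  linarith

lemma lipschitzWith_upperEnvelope (hab : a ≤ b) :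
    LipschitzWith k (fun t => upperEnvelope a b m k t x) := by
  refine LipschitzWith.of_dist_le_mul fun t t' => ?_
  have key : ∀ t t', upperEnvelope a b m k t x ≤ upperEnvelope a b m k t' x + k * |t - t'| :=
    fun t t' => by
      simpa using upperEnvelope_le_add (m := m) (k := k) (x := x) (t := t) (t' := t') hab
        (r := 0) (ρ := |t - t'|) fun s hs =>
          ⟨s, hs, by simp, by rw [show s - t - (s - t') = t' - t by ring, abs_sub_comm]⟩
  have := key t' t
  rw [abs_sub_comm] at this
  rw [Real.dist_eq, Real.dist_eq, NNReal.coe_natCast, abs_sub_le_iff]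
  exact ⟨by linarith [key t t'], by linarith⟩

lemma antitone_upperEnvelope (hab : a ≤ b) :
    Antitone fun k : ℕ => upperEnvelope a b m k t x := by
  intro k k' hkk'
  have hk : (k : ℝ) ≤ k' := Nat.cast_le.2 hkk'
  have := csSup_image_le_csSup_image_add (c := 0) (nonempty_Icc.2 hab)
    (bddAbove_upperEnvelope_image (m := m) (k := k) (x := x) (t := t))
    (f := fun s => clamp m (x s) - k' * |s - t|) fun s hs =>
      ⟨s, hs, by nlinarith [mul_le_mul_of_nonneg_right hk (abs_nonneg (s - t))]⟩
  rwa [add_zero] at this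

lemma abs_upperEnvelope_sub_le_of_timeChange (hab : a ≤ b) {l : ℝ → ℝ} {r : ℝ}
    (hl : TimeChange a b l) (h : ∀ s ∈ Icc a b, |l s - s| ≤ r ∧ |x s - y (l s)| ≤ r) :
    |upperEnvelope a b m k t x - upperEnvelope a b m k t y| ≤ (k + 1) * r := by
  have hxy := upperEnvelope_le_add (m := m) (k := k) (t := t) (t' := t) (x := x) (y := y) hab
    fun s hs => ⟨l s, hl.2.2.2.2 hs, (h s hs).2, by simpa [abs_sub_comm] using (h s hs).1⟩
  have hyx := upperEnvelope_le_add (m := m) (k := k) (t := t) (t' := t) (x := y) (y := x) hab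
    fun s hs => by
      obtain ⟨s', hs', rfl⟩ := TimeChange.surjOn hab hl hs
      exact ⟨s', hs', by simpa [abs_sub_comm] using (h s' hs').2, by simpa using (h s' hs').1⟩
  rw [abs_sub_le_iff]
  constructor <;> linarith

lemma j1ContinuousAt_upperEnvelope (hab : a ≤ b) (hx : CadlagOn a b x) :
    J1ContinuousAt a b (upperEnvelope a b m k t) x := by
  intro ε hε
  refine ⟨ε / (k + 2), by positivity, fun y hy hxy => ?_⟩
  obtain ⟨r, hrδ, l, hl, h⟩ := exists_timeChange_of_J1dist_lt hx hy hxy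
  have hr : 0 ≤ r := (abs_nonneg _).trans (h a (left_mem_Icc.2 hab)).1
  have hrε : r * (k + 2) < ε := (lt_div_iff₀ (by positivity)).1 hrδ
  rw [abs_sub_comm]
  calc _ ≤ (k + 1) * r := abs_upperEnvelope_sub_le_of_timeChange hab hl h
    _ < ε := by nlinarith

lemma tendsto_upperEnvelope_atTop (ht : t ∈ Icc a b) (hx : ContinuousWithinAt x (Icc a b) t) :
    Tendsto (fun k : ℕ => upperEnvelope a b m k t x) atTop (nhds (clamp m (x t))) := by
  refine tendsto_order.2 ⟨fun c hc => Eventually.of_forall fun k =>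
    hc.trans_le (clamp_le_upperEnvelope ht), fun c hc => ?_⟩
  obtain ⟨η, hη, hxη⟩ :=
    Metric.continuousWithinAt_iff.1 hx ((c - clamp m (x t)) / 2) (by linarith)
  obtain ⟨K, hK⟩ := exists_nat_ge (2 * |m| / η)
  have hKη : 2 * |m| ≤ K * η := (div_le_iff₀ hη).1 hK
  filter_upwards [eventually_ge_atTop K] with k hk
  refine lt_of_le_of_lt (csSup_le ((nonempty_of_mem ht).image _) ?_)
    (show clamp m (x t) + (c - clamp m (x t)) / 2 < c by linarith)
  rintro _ ⟨s, hs, rfl⟩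
  have hk0 : 0 ≤ (k : ℝ) * |s - t| := by positivity
  -- far from `t`, the kernel pushes the value below `-|m|`
  by_cases hst : |s - t| < η
  · have hxs := (abs_clamp_sub_clamp_le m (x s) (x t)).trans_lt (hxη hs hst)
    dsimp only
    linarith [le_abs_self (clamp m (x s) - clamp m (x t))]
  · have hkK : (K : ℝ) * η ≤ k * |s - t| :=
      mul_le_mul (Nat.cast_le.2 hk) (not_lt.1 hst) hη.le (Nat.cast_nonneg k)
    dsimp only
    linarith [clamp_le_abs m (x s), neg_abs_le_clamp m (x t)]

variable {Ω : Type*} [MeasurableSpace Ω] {μ : Measure Ω} {Y : Ω → ℝ → ℝ}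

-- For right-continuous paths the supremum may be taken over the countable set `[a,b] ∩ (ℚ ∪ {b})`.
lemma aemeasurable_upperEnvelope (hab : a ≤ b) (hY : ∀ s, Measurable fun ω => Y ω s)
    (hcad : ∀ᵐ ω ∂μ, CadlagOn a b (Y ω)) :
    AEMeasurable (fun ω => upperEnvelope a b m k t (Y ω)) μ := by
  set T : Set ℝ := insert b (range ((↑) : ℚ → ℝ))
  have : Countable ↥(Icc a b ∩ T) :=
    (((countable_range _).insert b).mono inter_subset_right).to_subtype
  refine (Measurable.aemeasurable (f := fun ω =>
    sSup ((fun s => clamp m (Y ω s) - k * |s - t|) '' (Icc a b ∩ T))) ?_).congr ?_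
  · simp_rw [sSup_image']
    exact Measurable.iSup fun s => ((continuous_clamp m).measurable.comp (hY s)).sub_const _
  · filter_upwards [hcad] with ω hω
    refine csSup_image_Icc_inter_dense (Rat.denseRange_cast.mono (subset_insert _ _))
      (mem_insert _ _) hab (fun s hs => ?_) bddAbove_upperEnvelope_image
    exact (((continuous_clamp m).tendsto _).comp (hω.1 s hs)).sub
      ((Continuous.tendsto (by fun_prop) s).mono_left nhdsWithin_le_nhds)

lemma integrable_upperEnvelope [IsFiniteMeasure μ] (hab : a ≤ b)
    (hY : ∀ s, Measurable fun ω => Y ω s) (hcad : ∀ᵐ ω ∂μ, CadlagOn a b (Y ω)) :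
    Integrable (fun ω => upperEnvelope a b m k t (Y ω)) μ :=
  (integrable_const (|m| + k * |a - t|)).mono'
    (aemeasurable_upperEnvelope hab hY hcad).aestronglyMeasurable
    (Eventually.of_forall fun _ => abs_upperEnvelope_le hab)

lemma integral_le_integral_upperEnvelope [IsFiniteMeasure μ] (hab : a ≤ b) (ht : t ∈ Icc a b)
    (hY : ∀ s, Measurable fun ω => Y ω s) (hcad : ∀ᵐ ω ∂μ, CadlagOn a b (Y ω))
    (hbd : ∀ᵐ ω ∂μ, ∀ s ∈ Icc a b, |Y ω s| ≤ m) :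
    ∫ ω, Y ω t ∂μ ≤ ∫ ω, upperEnvelope a b m k t (Y ω) ∂μ := by
  refine integral_mono_ae ((integrable_const m).mono' (hY t).aestronglyMeasurable
    (hbd.mono fun ω hω => hω t ht)) (integrable_upperEnvelope hab hY hcad) ?_
  filter_upwards [hbd] with ω hω
  simpa only [clamp_of_abs_le (hω t ht)] using
    clamp_le_upperEnvelope (m := m) (k := k) (x := Y ω) ht

lemma tendsto_integral_upperEnvelope_atTop [IsFiniteMeasure μ] (hab : a ≤ b) (ht : t ∈ Icc a b)
    (hY : ∀ s, Measurable fun ω => Y ω s) (hcad : ∀ᵐ ω ∂μ, CadlagOn a b (Y ω))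
    (hbd : ∀ᵐ ω ∂μ, ∀ s ∈ Icc a b, |Y ω s| ≤ m)
    (hcont : ∀ᵐ ω ∂μ, ContinuousWithinAt (Y ω) (Icc a b) t) :
    Tendsto (fun k : ℕ => ∫ ω, upperEnvelope a b m k t (Y ω) ∂μ) atTop
      (nhds (∫ ω, Y ω t ∂μ)) := by
  refine tendsto_integral_filter_of_dominated_convergence (fun _ => |m|)
    (Eventually.of_forall fun k => (aemeasurable_upperEnvelope hab hY hcad).aestronglyMeasurable)
    (Eventually.of_forall fun k => Eventually.of_forall fun ω => abs_upperEnvelope_le_of_mem ht)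
    (integrable_const _) ?_
  filter_upwards [hcont, hbd] with ω hωc hω
  simpa only [clamp_of_abs_le (hω t ht)] using tendsto_upperEnvelope_atTop (m := m) ht hωc

lemma lipschitzWith_integral_upperEnvelope [IsProbabilityMeasure μ] (hab : a ≤ b) (k : ℕ)
    (hY : ∀ s, Measurable fun ω => Y ω s) (hcad : ∀ᵐ ω ∂μ, CadlagOn a b (Y ω)) :
    LipschitzWith k fun t => ∫ ω, upperEnvelope a b m k t (Y ω) ∂μ :=
  lipschitzWith_integral (fun _ => lipschitzWith_upperEnvelope hab)
    fun _ => integrable_upperEnvelope hab hY hcad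

lemma tendstoUniformlyOn_integral_upperEnvelope_atTop [IsProbabilityMeasure μ] (hab : a ≤ b)
    (hY : ∀ s, Measurable fun ω => Y ω s) (hcad : ∀ᵐ ω ∂μ, CadlagOn a b (Y ω))
    (hbd : ∀ᵐ ω ∂μ, ∀ s ∈ Icc a b, |Y ω s| ≤ m)
    (hcont : ∀ t ∈ Icc a b, ∀ᵐ ω ∂μ, ContinuousWithinAt (Y ω) (Icc a b) t) :
    TendstoUniformlyOn (fun (k : ℕ) t => ∫ ω, upperEnvelope a b m k t (Y ω) ∂μ)
      (fun t => ∫ ω, Y ω t ∂μ) atTop (Icc a b) :=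
  Antitone.tendstoUniformlyOn_of_forall_tendsto isCompact_Icc
    (fun k => (lipschitzWith_integral_upperEnvelope hab k hY hcad).continuous.continuousOn)
    (fun _ _ _ _ hkk' => integral_mono (integrable_upperEnvelope hab hY hcad)
      (integrable_upperEnvelope hab hY hcad) fun _ => antitone_upperEnvelope hab hkk')
    (continuousOn_integral hY hbd hcont)
    fun t ht => tendsto_integral_upperEnvelope_atTop hab ht hY hcad hbd (hcont t ht)

lemma tendstoUniformlyOn_integral_upperEnvelope [IsProbabilityMeasure μ] {X : ℕ → Ω → ℝ → ℝ}
    {X₀ : Ω → ℝ → ℝ} (hab : a ≤ b) (k : ℕ) (hmeas : ∀ n t, Measurable fun ω => X n ω t)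
    (hcad : ∀ n, ∀ᵐ ω ∂μ, CadlagOn a b (X n ω)) (hweak : WeakConvJ1 μ a b X X₀) :
    TendstoUniformlyOn (fun n t => ∫ ω, upperEnvelope a b m k t (X n ω) ∂μ)
      (fun t => ∫ ω, upperEnvelope a b m k t (X₀ ω) ∂μ) atTop (Icc a b) := by
  refine EquicontinuousOn.tendstoUniformlyOn_of_tendsto isCompact_Icc ?_ fun t _ =>
    hweak _ ⟨|m| + k * |a - t|, fun _ => abs_upperEnvelope_le hab⟩
      fun _ hx => j1ContinuousAt_upperEnvelope hab hx
  exact ((LipschitzWith.uniformEquicontinuous _ k fun n =>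
    lipschitzWith_integral_upperEnvelope hab k (hmeas n) (hcad n)).equicontinuous).equicontinuousOn
      _

lemma eventually_integral_le_add [IsProbabilityMeasure μ] {X : ℕ → Ω → ℝ → ℝ} {X₀ : Ω → ℝ → ℝ}
    (hab : a ≤ b)
    (hmeas : ∀ n t, Measurable fun ω => X n ω t) (hmeas₀ : ∀ t, Measurable fun ω => X₀ ω t)
    (hcad : ∀ n, ∀ᵐ ω ∂μ, CadlagOn a b (X n ω)) (hcad₀ : ∀ᵐ ω ∂μ, CadlagOn a b (X₀ ω))
    (hbd : ∀ᵐ ω ∂μ, ∀ n, ∀ t ∈ Icc a b, |X n ω t| ≤ m)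
    (hbd₀ : ∀ᵐ ω ∂μ, ∀ t ∈ Icc a b, |X₀ ω t| ≤ m) (hweak : WeakConvJ1 μ a b X X₀)
    (hnofix : ∀ t ∈ Icc a b, ∀ᵐ ω ∂μ, ContinuousWithinAt (X₀ ω) (Icc a b) t)
    {ε : ℝ} (hε : 0 < ε) :
    ∀ᶠ n in atTop, ∀ t ∈ Icc a b, ∫ ω, X n ω t ∂μ ≤ ∫ ω, X₀ ω t ∂μ + ε := by
  obtain ⟨K, hK⟩ := (Metric.tendstoUniformlyOn_iff.1
    (tendstoUniformlyOn_integral_upperEnvelope_atTop (m := m) hab hmeas₀ hcad₀ hbd₀ hnofix)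
    (ε / 2) (half_pos hε)).exists
  filter_upwards [Metric.tendstoUniformlyOn_iff.1 (tendstoUniformlyOn_integral_upperEnvelope
    (m := m) hab K hmeas hcad hweak) (ε / 2) (half_pos hε)] with n hn t ht
  have h₁ := integral_le_integral_upperEnvelope (k := K) hab ht (hmeas n) (hcad n)
    (hbd.mono fun _ h => h n)
  have h₂ := (abs_lt.1 (hn t ht)).1
  have h₃ := (abs_lt.1 (hK t ht)).1
  linarith

end UpperEnvelope

theorem stmt5_general (a b : ℝ) (hab : a < b) {Ω : Type*} [MeasurableSpace Ω] (μ : Measure Ω)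
    [IsProbabilityMeasure μ] (m : ℝ)
    (X : ℕ → Ω → ℝ → ℝ) (X₀ : Ω → ℝ → ℝ)
    (hmeas : ∀ n t, Measurable fun ω => X n ω t) (hmeas₀ : ∀ t, Measurable fun ω => X₀ ω t)
    (hcad : ∀ n, ∀ᵐ ω ∂μ, CadlagOn a b (X n ω)) (hcad₀ : ∀ᵐ ω ∂μ, CadlagOn a b (X₀ ω))
    (hbd : ∀ᵐ ω ∂μ, ∀ n, ∀ t ∈ Set.Icc a b, |X n ω t| ≤ m)
    (hbd₀ : ∀ᵐ ω ∂μ, ∀ t ∈ Set.Icc a b, |X₀ ω t| ≤ m)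
    (hweak : WeakConvJ1 μ a b X X₀)
    (hnofix : ∀ t ∈ Set.Icc a b, ∀ᵐ ω ∂μ, ContinuousWithinAt (X₀ ω) (Set.Icc a b) t) :
    (∀ n, CadlagOn a b fun t => ∫ ω, X n ω t ∂μ) ∧
    (CadlagOn a b fun t => ∫ ω, X₀ ω t ∂μ) ∧
    ContinuousOn (fun t => ∫ ω, X₀ ω t ∂μ) (Set.Icc a b) ∧
    TendstoUniformlyOn (fun n t => ∫ ω, X n ω t ∂μ) (fun t => ∫ ω, X₀ ω t ∂μ) atTop
      (Set.Icc a b) := by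
  refine ⟨fun n => cadlagOn_integral (hmeas n) (hcad n) (hbd.mono fun _ h => h n),
    cadlagOn_integral hmeas₀ hcad₀ hbd₀, continuousOn_integral hmeas₀ hbd₀ hnofix, ?_⟩
  refine Metric.tendstoUniformlyOn_iff.2 fun ε hε => ?_
  have upper := UpperEnvelope.eventually_integral_le_add hab.le hmeas hmeas₀ hcad hcad₀ hbd hbd₀
    hweak hnofix (half_pos hε)
  have lower := UpperEnvelope.eventually_integral_le_add (X := fun n ω s => -X n ω s)
    (X₀ := fun ω s => -X₀ ω s) hab.le (fun n t => (hmeas n t).neg) (fun t => (hmeas₀ t).neg)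
    (fun n => (hcad n).mono fun _ h => h.neg) (hcad₀.mono fun _ h => h.neg)
    (hbd.mono fun _ h n t ht => (abs_neg _).trans_le (h n t ht))
    (hbd₀.mono fun _ h t ht => (abs_neg _).trans_le (h t ht)) hweak.neg
    (fun t ht => (hnofix t ht).mono fun _ h => h.neg) (half_pos hε)
  filter_upwards [upper, lower] with n hup hlow t ht
  have h₁ := hup t ht
  have h₂ := hlow t ht
  rw [integral_neg, integral_neg] at h₂
  rw [Real.dist_eq, abs_lt]
  constructor <;> linarith

/-- If `X_n` are random elements of `D([a,b])` uniformly bounded by `m`, converging weakly in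
the `J_1` topology to `X₀` which has no fixed jumps, then `𝔼[X_n]` and `𝔼[X₀]` are càdlàg,
`𝔼[X₀]` is continuous on `[a,b]`, and `𝔼[X_n] → 𝔼[X₀]` uniformly on `[a,b]`. -/
theorem stmt5 (a b : ℝ) (hab : a < b) {Ω : Type*} [MeasurableSpace Ω] (μ : Measure Ω)
    [IsProbabilityMeasure μ] (m : ℝ) (hm : 0 < m)
    (X : ℕ → Ω → ℝ → ℝ) (X₀ : Ω → ℝ → ℝ)
    (hmeas : ∀ n t, Measurable fun ω => X n ω t) (hmeas₀ : ∀ t, Measurable fun ω => X₀ ω t)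
    (hcad : ∀ n, ∀ᵐ ω ∂μ, CadlagOn a b (X n ω)) (hcad₀ : ∀ᵐ ω ∂μ, CadlagOn a b (X₀ ω))
    (hbd : ∀ᵐ ω ∂μ, ∀ n, ∀ t ∈ Set.Icc a b, |X n ω t| ≤ m)
    (hbd₀ : ∀ᵐ ω ∂μ, ∀ t ∈ Set.Icc a b, |X₀ ω t| ≤ m)
    (hweak : WeakConvJ1 μ a b X X₀)
    (hnofix : ∀ t ∈ Set.Icc a b, ∀ᵐ ω ∂μ, ContinuousWithinAt (X₀ ω) (Set.Icc a b) t) :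
    (∀ n, CadlagOn a b fun t => ∫ ω, X n ω t ∂μ) ∧
    (CadlagOn a b fun t => ∫ ω, X₀ ω t ∂μ) ∧
    ContinuousOn (fun t => ∫ ω, X₀ ω t ∂μ) (Set.Icc a b) ∧
    TendstoUniformlyOn (fun n t => ∫ ω, X n ω t ∂μ) (fun t => ∫ ω, X₀ ω t ∂μ) atTop
      (Set.Icc a b) :=
  stmt5_general a b hab μ m X X₀ hmeas hmeas₀ hcad hcad₀ hbd hbd₀ hweak hnofix
end

section
/- Let W, W' be independent random elements of D(I), each with distribution ν satisfying: for every t ∈ I, ν({x : t ∈ Disc(x)}) = 0. Then almost surely W and W' have no common discontinuity point, i.e. P(Disc(W) ∩ Disc(W') ≠ ∅) = 0. -/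
/-!
Fix `ε > 0`. A càdlàg path oscillates by `ε` at every scale only at finitely many points, since
an accumulation point of such points would contradict the existence of one-sided limits there.
Each of these points is a discontinuity time of the independent second path with probability
zero, so by Fubini the event that both paths oscillate by `ε` at a common point is null. An
interior common discontinuity is such a point for `ε = 1/(m+1)` and some `m`; the endpoints are
covered directly by the absence of fixed jumps. Functions `ℝ → ℝ` carry the product σ-algebra,
so oscillations are tested at rational times, which makes these events measurable.
-/

open MeasureTheory ProbabilityTheory Filter Set

open Topology Metric

def ratOscSet (ε : ℝ) (s : Set ℝ) : Set (ℝ → ℝ) :=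
  {x | ∃ q q' : ℚ, (q : ℝ) ∈ s ∧ (q' : ℝ) ∈ s ∧ ε ≤ dist (x q) (x q')}

def oscPoints (s : Set ℝ) (ε : ℝ) (x : ℝ → ℝ) : Set ℝ :=
  {t ∈ s | ∀ r > 0, x ∈ ratOscSet ε (s ∩ ball t r)}

lemma ratOscSet_mono {ε : ℝ} {s s' : Set ℝ} (h : s ⊆ s') : ratOscSet ε s ⊆ ratOscSet ε s' :=
  fun _ ⟨q, q', hq, hq', hqq'⟩ => ⟨q, q', h hq, h hq', hqq'⟩

lemma oscPoints_anti {s : Set ℝ} {ε ε' : ℝ} {x : ℝ → ℝ} (h : ε ≤ ε') :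
    oscPoints s ε' x ⊆ oscPoints s ε x := by
  rintro t ⟨hts, ht⟩
  refine ⟨hts, fun r hr => ?_⟩
  obtain ⟨q, q', hq, hq', hqq'⟩ := ht r hr
  exact ⟨q, q', hq, hq', h.trans hqq'⟩

lemma measurableSet_ratOscSet (ε : ℝ) (s : Set ℝ) : MeasurableSet (ratOscSet ε s) := by
  have h : ratOscSet ε s = ⋃ q : ℚ, ⋃ q' : ℚ,
      {_x : ℝ → ℝ | (q : ℝ) ∈ s} ∩ ({_x | (q' : ℝ) ∈ s} ∩ {x | ε ≤ dist (x q) (x q')}) := by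
    ext x
    simp [ratOscSet]
  rw [h]
  exact .iUnion fun q => .iUnion fun q' =>
    (MeasurableSet.const _).inter ((MeasurableSet.const _).inter
      (measurableSet_le measurable_const ((measurable_pi_apply _).dist (measurable_pi_apply _))))

lemma IsCompact.exists_forall_inter_ball {α : Type*} [PseudoMetricSpace α] {s : Set α}
    (hs : IsCompact s) {P : Set α → Prop} (hP : Monotone P) (hP₀ : ¬ P ∅)
    (h : ∀ n : ℕ, ∃ c, P (s ∩ ball c (1 / (n + 1)))) :
    ∃ t ∈ s, ∀ r > 0, P (s ∩ ball t r) := by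
  choose c hc using h
  have hne : ∀ n : ℕ, (s ∩ ball (c n) (1 / (n + 1))).Nonempty := fun n =>
    nonempty_iff_ne_empty.2 fun he => hP₀ (he ▸ hc n)
  choose p hp using hne
  obtain ⟨t, hts, φ, hφ, hpt⟩ := hs.tendsto_subseq fun n => (hp n).1
  refine ⟨t, hts, fun r hr => ?_⟩
  have hsmall : ∀ᶠ j in atTop, dist (p (φ j)) t < r / 2 ∧ 1 / ((φ j : ℝ) + 1) < r / 4 :=
    (Metric.tendsto_nhds.1 hpt _ (by positivity)).and
      ((tendsto_one_div_add_atTop_nhds_zero_nat.comp hφ.tendsto_atTop).eventually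
        (gt_mem_nhds (by positivity)))
  obtain ⟨j, hpj, hj⟩ := hsmall.exists
  refine hP (inter_subset_inter_right _ (ball_subset_ball' ?_)) (hc (φ j))
  have hcp : dist (p (φ j)) (c (φ j)) < 1 / ((φ j : ℝ) + 1) := (hp (φ j)).2
  linarith [dist_triangle (c (φ j)) (p (φ j)) t, dist_comm (p (φ j)) (c (φ j))]

lemma measurableSet_setOf_oscPoints_inter_nonempty {s : Set ℝ} (hs : IsCompact s) (ε : ℝ) :
    MeasurableSet
      {p : (ℝ → ℝ) × (ℝ → ℝ) | (oscPoints s ε p.1 ∩ oscPoints s ε p.2).Nonempty} := by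
  have h : {p : (ℝ → ℝ) × (ℝ → ℝ) | (oscPoints s ε p.1 ∩ oscPoints s ε p.2).Nonempty} =
      ⋂ n : ℕ, ⋃ c : ℚ, ratOscSet ε (s ∩ ball c (1 / (n + 1))) ×ˢ
        ratOscSet ε (s ∩ ball c (1 / (n + 1))) := by
    ext ⟨x, y⟩
    simp only [mem_ofPred_eq, mem_iInter, mem_iUnion, mem_prod]
    constructor
    · rintro ⟨t, htx, hty⟩ n
      have hr : (0 : ℝ) < 1 / (n + 1) / 2 := by positivity
      obtain ⟨c, hc⟩ := Rat.denseRange_cast.exists_dist_lt t hr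
      have hsub : s ∩ ball t (1 / (n + 1) / 2) ⊆ s ∩ ball (c : ℝ) (1 / (n + 1)) :=
        inter_subset_inter_right _ (ball_subset_ball' (by linarith))
      exact ⟨c, ratOscSet_mono hsub (htx.2 _ hr), ratOscSet_mono hsub (hty.2 _ hr)⟩
    · intro h
      obtain ⟨t, hts, ht⟩ := hs.exists_forall_inter_ball
        (P := fun u => x ∈ ratOscSet ε u ∧ y ∈ ratOscSet ε u)
        (fun u v huv h => ⟨ratOscSet_mono huv h.1, ratOscSet_mono huv h.2⟩)
        (by simp [ratOscSet]) fun n => let ⟨c, hc⟩ := h n; ⟨c, hc⟩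
      exact ⟨t, ⟨hts, fun r hr => (ht r hr).1⟩, ⟨hts, fun r hr => (ht r hr).2⟩⟩
  rw [h]
  exact .iInter fun n => .iUnion fun c =>
    (measurableSet_ratOscSet _ _).prod (measurableSet_ratOscSet _ _)

lemma not_continuousWithinAt_of_mem_oscPoints {s : Set ℝ} {ε t : ℝ} {x : ℝ → ℝ} (hε : 0 < ε)
    (ht : t ∈ oscPoints s ε x) : ¬ ContinuousWithinAt x s t := by
  intro hcont
  obtain ⟨r, hr, hball⟩ :=
    Metric.mem_nhdsWithin_iff.1 (Metric.tendsto_nhds.1 hcont (ε / 2) (half_pos hε))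
  obtain ⟨q, q', hq, hq', hqq'⟩ := ht.2 r hr
  have h₁ : dist (x q) (x t) < ε / 2 := hball ⟨hq.2, hq.1⟩
  have h₂ : dist (x q') (x t) < ε / 2 := hball ⟨hq'.2, hq'.1⟩
  linarith [dist_triangle_right (x q) (x q') (x t)]

lemma eventually_notMem_oscPoints_of_tendsto {s D : Set ℝ} {ε t L : ℝ} {x : ℝ → ℝ}
    (hε : 0 < ε) (hD : IsOpen D) (hL : Tendsto x (𝓝[s ∩ D] t) (𝓝 L)) :
    ∀ᶠ t' in 𝓝[D] t, t' ∉ oscPoints s ε x := by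
  obtain ⟨O, hO, htO, hOsub⟩ :=
    mem_nhdsWithin.1 (Metric.tendsto_nhds.1 hL (ε / 2) (half_pos hε))
  filter_upwards [inter_mem_nhdsWithin D (hO.mem_nhds htO)] with t' ht'
  rintro ⟨-, hosc⟩
  obtain ⟨r, hr, hball⟩ := Metric.isOpen_iff.1 (hD.inter hO) t' ht'
  obtain ⟨q, q', hq, hq', hqq'⟩ := hosc r hr
  have h₁ : dist (x q) L < ε / 2 := hOsub ⟨(hball hq.2).2, hq.1, (hball hq.2).1⟩
  have h₂ : dist (x q') L < ε / 2 := hOsub ⟨(hball hq'.2).2, hq'.1, (hball hq'.2).1⟩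
  linarith [dist_triangle_right (x q) (x q') L]

lemma exists_rat_mem_of_mem_nhdsWithin {D U : Set ℝ} {t : ℝ} (hD : IsOpen D) [(𝓝[D] t).NeBot]
    (hU : U ∈ 𝓝[D] t) : ∃ q : ℚ, (q : ℝ) ∈ U := by
  obtain ⟨O, hO, htO, hOU⟩ := mem_nhdsWithin.1 hU
  obtain ⟨q, hq⟩ := Rat.denseRange_cast.exists_mem_open (hO.inter hD)
    (nonempty_of_mem (inter_comm D O ▸ inter_mem_nhdsWithin D (hO.mem_nhds htO)))
  exact ⟨q, hOU hq⟩

namespace CadlagOn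

variable {a b t : ℝ} {x : ℝ → ℝ}

lemma exists_tendsto_left (hx : CadlagOn a b x) (ht : t ∈ Icc a b) :
    ∃ L, Tendsto x (𝓝[Icc a b ∩ Iio t] t) (𝓝 L) := by
  rcases ht.1.eq_or_lt with hat | hat
  · have hempty : Icc a b ∩ Iio t = ∅ :=
      eq_empty_iff_forall_notMem.2 fun u hu => hu.2.not_ge (hat ▸ hu.1.1)
    exact ⟨0, by rw [hempty, nhdsWithin_empty]; exact tendsto_bot⟩
  · obtain ⟨L, hL⟩ := hx.2 t ⟨hat, ht.2⟩
    exact ⟨L, hL.mono_left (nhdsWithin_mono _ inter_subset_right)⟩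

lemma exists_tendsto_right (hx : CadlagOn a b x) (ht : t ∈ Icc a b) :
    ∃ R, Tendsto x (𝓝[Icc a b ∩ Ioi t] t) (𝓝 R) := by
  rcases ht.2.eq_or_lt with htb | htb
  · have hempty : Icc a b ∩ Ioi t = ∅ :=
      eq_empty_iff_forall_notMem.2 fun u hu => hu.2.not_ge (htb ▸ hu.1.2)
    exact ⟨0, by rw [hempty, nhdsWithin_empty]; exact tendsto_bot⟩
  · exact ⟨x t, (hx.1 t ⟨ht.1, htb⟩).mono_left (nhdsWithin_mono _ inter_subset_right)⟩

lemma finite_oscPoints {ε : ℝ} (hx : CadlagOn a b x) (hε : 0 < ε) :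
    (oscPoints (Icc a b) ε x).Finite := by
  by_contra hinf
  obtain ⟨t, ht, hacc⟩ :=
    Set.Infinite.exists_accPt_of_subset_isCompact hinf isCompact_Icc fun _ h => h.1
  obtain ⟨L, hL⟩ := hx.exists_tendsto_left ht
  obtain ⟨R, hR⟩ := hx.exists_tendsto_right ht
  refine accPt_iff_frequently_nhdsNE.1 hacc ?_
  rw [← nhdsLT_sup_nhdsGT]
  exact eventually_sup.2 ⟨eventually_notMem_oscPoints_of_tendsto hε isOpen_Iio hL,
    eventually_notMem_oscPoints_of_tendsto hε isOpen_Ioi hR⟩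

lemma measure_setOf_oscPoints_inter_nonempty {ε : ℝ} (hx : CadlagOn a b x) (hε : 0 < ε)
    {ν : Measure (ℝ → ℝ)} (hν : ∀ t ∈ Icc a b, ν {y | ¬ ContinuousWithinAt y (Icc a b) t} = 0) :
    ν {y | (oscPoints (Icc a b) ε x ∩ oscPoints (Icc a b) ε y).Nonempty} = 0 := by
  refine measure_mono_null (t := ⋃ t ∈ oscPoints (Icc a b) ε x,
    {y | ¬ ContinuousWithinAt y (Icc a b) t}) ?_ ?_
  · rintro y ⟨t, htx, hty⟩
    exact mem_biUnion htx (not_continuousWithinAt_of_mem_oscPoints hε hty)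
  · exact (measure_biUnion_null_iff (hx.finite_oscPoints hε).countable).2 fun t ht => hν t ht.1

/-- At an interior discontinuity the left limit `L` differs from `x t`; rational points just
left of `t` see values near `L`, those just right of `t` values near `x t`. -/
lemma exists_pos_mem_oscPoints (hx : CadlagOn a b x) (ht : t ∈ Ioo a b)
    (hd : ¬ ContinuousWithinAt x (Icc a b) t) : ∃ ε > 0, t ∈ oscPoints (Icc a b) ε x := by
  obtain ⟨L, hL⟩ := hx.2 t ⟨ht.1, ht.2.le⟩
  have hR := hx.1 t ⟨ht.1.le, ht.2⟩
  have hIcc : Icc a b ∈ 𝓝 t := Icc_mem_nhds ht.1 ht.2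
  have hjump : 0 < dist (x t) L := by
    refine dist_pos.2 fun h => hd ((continuousWithinAt_iff_continuousAt hIcc).2 ?_)
    refine continuousAt_iff_continuous_left'_right'.2 ⟨?_, hR⟩
    rwa [ContinuousWithinAt, h]
  refine ⟨dist (x t) L / 2, half_pos hjump, Ioo_subset_Icc_self ht, fun r hr => ?_⟩
  have hnear : Icc a b ∩ ball t r ∈ 𝓝 t := inter_mem hIcc (ball_mem_nhds t hr)
  have hδ : 0 < dist (x t) L / 4 := by positivity
  obtain ⟨q, hq, hqL⟩ := exists_rat_mem_of_mem_nhdsWithin isOpen_Iio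
    (inter_mem (mem_nhdsWithin_of_mem_nhds hnear) (Metric.tendsto_nhds.1 hL _ hδ))
  obtain ⟨q', hq', hq't⟩ := exists_rat_mem_of_mem_nhdsWithin isOpen_Ioi
    (inter_mem (mem_nhdsWithin_of_mem_nhds hnear) (Metric.tendsto_nhds.1 hR _ hδ))
  refine ⟨q, q', hq, hq', ?_⟩
  have hqL : dist (x q) L < dist (x t) L / 4 := hqL
  have hq't : dist (x q') (x t) < dist (x t) L / 4 := hq't
  linarith [dist_triangle4 (x t) (x q') (x q) L, dist_comm (x t) (x q'), dist_comm (x q') (x q)]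

lemma exists_nat_oscPoints_inter_nonempty {y : ℝ → ℝ} (hx : CadlagOn a b x)
    (hy : CadlagOn a b y) (ht : t ∈ Ioo a b) (hdx : ¬ ContinuousWithinAt x (Icc a b) t)
    (hdy : ¬ ContinuousWithinAt y (Icc a b) t) :
    ∃ m : ℕ,
      (oscPoints (Icc a b) (1 / (m + 1)) x ∩ oscPoints (Icc a b) (1 / (m + 1)) y).Nonempty := by
  obtain ⟨εx, hεx, htx⟩ := hx.exists_pos_mem_oscPoints ht hdx
  obtain ⟨εy, hεy, hty⟩ := hy.exists_pos_mem_oscPoints ht hdy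
  obtain ⟨m, hm⟩ := exists_nat_one_div_lt (lt_min hεx hεy)
  exact ⟨m, t, oscPoints_anti (hm.le.trans (min_le_left _ _)) htx,
    oscPoints_anti (hm.le.trans (min_le_right _ _)) hty⟩

end CadlagOn

lemma ProbabilityTheory.IndepFun.measure_preimage_eq_zero_of_ae_section {Ω α β : Type*}
    [MeasurableSpace Ω] [MeasurableSpace α] [MeasurableSpace β] {μ : Measure Ω} [IsFiniteMeasure μ]
    {X : Ω → α} {Y : Ω → β} (hX : Measurable X) (hY : Measurable Y) (hXY : IndepFun X Y μ)
    {E : Set (α × β)} (hE : MeasurableSet E)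
    (h : ∀ᵐ ω ∂μ, μ.map Y (Prod.mk (X ω) ⁻¹' E) = 0) :
    μ ((fun ω => (X ω, Y ω)) ⁻¹' E) = 0 := by
  rw [← Measure.map_apply (hX.prodMk hY) hE,
    (indepFun_iff_map_prod_eq_prod_map_map hX.aemeasurable hY.aemeasurable).1 hXY,
    Measure.measure_prod_null hE]
  exact (ae_map_iff hX.aemeasurable
    (measurable_measure_prodMk_left hE (measurableSet_singleton 0))).2 h

theorem stmt10_general (a b : ℝ) {Ω : Type*} [MeasurableSpace Ω] (μ : Measure Ω)
    [IsProbabilityMeasure μ]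
    (W W' : Ω → ℝ → ℝ) (hmW : Measurable W) (hmW' : Measurable W')
    (hindep : IndepFun W W' μ)
    (ν : Measure (ℝ → ℝ))
    (hν : Measure.map W μ = ν) (hν' : Measure.map W' μ = ν)
    (hcad : ∀ᵐ ω ∂μ, CadlagOn a b (W ω) ∧ CadlagOn a b (W' ω))
    (hnofix : ∀ t ∈ Set.Icc a b, ν {x | ¬ ContinuousWithinAt x (Set.Icc a b) t} = 0) :
    μ {ω | (DiscOn a b (W ω) ∩ DiscOn a b (W' ω)).Nonempty} = 0 := by
  set E : ℕ → Set ((ℝ → ℝ) × (ℝ → ℝ)) := fun m =>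
    {p | (oscPoints (Icc a b) (1 / (m + 1)) p.1 ∩ oscPoints (Icc a b) (1 / (m + 1)) p.2).Nonempty}
  have hE : ∀ m, μ ((fun ω => (W ω, W' ω)) ⁻¹' E m) = 0 := fun m =>
    hindep.measure_preimage_eq_zero_of_ae_section hmW hmW'
      (measurableSet_setOf_oscPoints_inter_nonempty isCompact_Icc _) <| by
        filter_upwards [hcad] with ω hω
        rw [hν']
        exact hω.1.measure_setOf_oscPoints_inter_nonempty (by positivity) hnofix
  have hends :
      μ (⋃ t ∈ Icc a b \ Ioo a b, W ⁻¹' {x | ¬ ContinuousWithinAt x (Icc a b) t}) = 0 := by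
    have hfin : (Icc a b \ Ioo a b).Finite := by
      refine (toFinite {a, b}).subset fun t ⟨⟨hat, htb⟩, hnot⟩ => ?_
      rcases hat.eq_or_lt with h | h
      · exact .inl h.symm
      · exact .inr (htb.eq_or_lt.resolve_right fun h' => hnot ⟨h, h'⟩)
    refine (measure_biUnion_null_iff hfin.countable).2 fun t ht => ?_
    exact nonpos_iff_eq_zero.1 <| (Measure.le_map_apply hmW.aemeasurable _).trans
      (hν ▸ hnofix t ht.1).le
  refine measure_mono_null (fun ω hω => ?_)
    (measure_union_null (measure_union_null (ae_iff.1 hcad) hends) (measure_iUnion_null hE))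
  obtain ⟨t, ⟨ht, hdW⟩, -, hdW'⟩ := hω
  by_cases hcω : CadlagOn a b (W ω) ∧ CadlagOn a b (W' ω)
  · by_cases hint : t ∈ Ioo a b
    · exact .inr (mem_iUnion.2 (hcω.1.exists_nat_oscPoints_inter_nonempty hcω.2 hint hdW hdW'))
    · exact .inl (.inr (mem_biUnion ⟨ht, hint⟩ hdW))
  · exact .inl (.inl hcω)

/-- If `W, W'` are independent random elements of `D([a,b])` with common distribution `ν`
having no fixed jumps, then almost surely `W` and `W'` have no common discontinuity point. -/
theorem stmt10 (a b : ℝ) (hab : a < b) {Ω : Type*} [MeasurableSpace Ω] (μ : Measure Ω)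
    [IsProbabilityMeasure μ]
    (W W' : Ω → ℝ → ℝ) (hmW : Measurable W) (hmW' : Measurable W')
    (hindep : IndepFun W W' μ)
    (ν : Measure (ℝ → ℝ))
    (hν : Measure.map W μ = ν) (hν' : Measure.map W' μ = ν)
    (hcad : ∀ᵐ ω ∂μ, CadlagOn a b (W ω) ∧ CadlagOn a b (W' ω))
    (hnofix : ∀ t ∈ Set.Icc a b, ν {x | ¬ ContinuousWithinAt x (Set.Icc a b) t} = 0) :
    μ {ω | (DiscOn a b (W ω) ∩ DiscOn a b (W' ω)).Nonempty} = 0 :=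
  stmt10_general a b μ W W' hmW hmW' hindep ν hν hν' hcad hnofix
end

section
/- For any compact interval I, any δ > 0, and any x ∈ D(I), there exist finitely many points t_1 < t_2 < ⋯ < t_m in I (depending only on I and δ, e.g. a δ-net of I) such that ‖x‖_∞ ≤ w''(x, δ) + max_{1≤k≤m} |x(t_k)| for all x ∈ D(I). -/
open MeasureTheory ProbabilityTheory Filter Set

/-- The ordinary modulus of continuity `w(x, δ)` of `x` on `[a,b]`. -/
noncomputable def oscMod (a b δ : ℝ) (x : ℝ → ℝ) : ℝ :=
  sSup {v : ℝ | ∃ s t : ℝ, s ∈ Set.Icc a b ∧ t ∈ Set.Icc a b ∧ |t - s| ≤ δ ∧ v = |x t - x s|}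

/-- The càdlàg modulus `w''(x, δ) = sup { |x t - x s| ⊓ |x u - x t| : s ≤ t ≤ u, u - s ≤ δ }`
on `[a,b]`. -/
noncomputable def cadlagMod (a b δ : ℝ) (x : ℝ → ℝ) : ℝ :=
  sSup {v : ℝ | ∃ s t u : ℝ, s ∈ Set.Icc a b ∧ t ∈ Set.Icc a b ∧ u ∈ Set.Icc a b ∧
    s ≤ t ∧ t ≤ u ∧ u - s ≤ δ ∧ v = min |x t - x s| |x u - x t|}

/-!
Cut `[a,b]` into `n` equal pieces of length `h ≤ δ` and let the `t_k` be the grid points. Each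
`t ∈ [a,b]` lies between two consecutive grid points `s ≤ t ≤ u` with `u - s ≤ δ`, and
`|x t| ≤ |x t - x s| + |x s|`, `|x t| ≤ |x u - x t| + |x u|`; taking the smaller of the two
increments gives `|x t| ≤ w''(x,δ) + max_k |x (t_k)|`.
-/

lemma exists_nat_lt_le_le_add_one {n : ℕ} (hn : 0 < n) {y : ℝ} (hy₀ : 0 ≤ y) (hyn : y ≤ n) :
    ∃ j : ℕ, j < n ∧ (j : ℝ) ≤ y ∧ y ≤ j + 1 := by
  refine ⟨min ⌊y⌋₊ (n - 1), by omega, ?_, ?_⟩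
  · exact (Nat.cast_le.mpr (min_le_left _ _)).trans (Nat.floor_le hy₀)
  · rcases le_total ⌊y⌋₊ (n - 1) with h | h
    · rw [min_eq_left h]
      exact (Nat.lt_floor_add_one y).le
    · rw [min_eq_right h, Nat.cast_sub hn, Nat.cast_one, sub_add_cancel]
      exact hyn

lemma exists_grid_Icc {a b δ : ℝ} (hab : a < b) (hδ : 0 < δ) :
    ∃ (m : ℕ) (ts : Fin m → ℝ), 0 < m ∧ StrictMono ts ∧ (∀ k, ts k ∈ Icc a b) ∧
      ∀ t ∈ Icc a b, ∃ i j, ts i ≤ t ∧ t ≤ ts j ∧ ts j - ts i ≤ δ := by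
  set n : ℕ := ⌈(b - a) / δ⌉₊
  have hba : 0 < b - a := sub_pos.mpr hab
  have hn : (0 : ℝ) < n := Nat.cast_pos.mpr (Nat.ceil_pos.mpr (div_pos hba hδ))
  set h : ℝ := (b - a) / n
  have hh : 0 < h := div_pos hba hn
  have hnh : n * h = b - a := mul_div_cancel₀ _ hn.ne'
  have hhδ : h ≤ δ := by
    rw [div_le_iff₀ hn, ← div_le_iff₀' hδ]
    exact Nat.le_ceil _
  refine ⟨n + 1, fun k => a + k * h, Nat.succ_pos n, ?_, ?_, ?_⟩
  · intro k l hkl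
    have : (k : ℝ) < l := Nat.cast_lt.mpr hkl
    dsimp only
    nlinarith
  · intro k
    have hk : (k : ℝ) ≤ n := Nat.cast_le.mpr (Nat.lt_succ_iff.mp k.2)
    constructor <;> nlinarith [(k : ℕ).cast_nonneg (α := ℝ)]
  · rintro t ⟨hat, htb⟩
    obtain ⟨j, hjn, hjt, htj⟩ := exists_nat_lt_le_le_add_one (Nat.cast_pos.mp hn)
      (div_nonneg (sub_nonneg.mpr hat) hh.le)
      ((div_le_iff₀ hh).mpr (by linarith))
    refine ⟨⟨j, by omega⟩, ⟨j + 1, by omega⟩, ?_, ?_, ?_⟩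
    · have := (le_div_iff₀ hh).mp hjt
      dsimp only
      linarith
    · have := (div_le_iff₀ hh).mp htj
      dsimp only
      push_cast
      linarith
    · dsimp only
      push_cast
      linarith

lemma abs_le_min_abs_sub_add {y p q M : ℝ} (hp : |p| ≤ M) (hq : |q| ≤ M) :
    |y| ≤ min |y - p| |q - y| + M := by
  have : |y| - M ≤ min |y - p| |q - y| :=
    le_min (by linarith [abs_sub_abs_le_abs_sub y p])
      (by linarith [abs_sub_abs_le_abs_sub y q, abs_sub_comm y q])
  linarith

lemma cadlagMod_nonneg (a b δ : ℝ) (x : ℝ → ℝ) : 0 ≤ cadlagMod a b δ x :=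
  Real.sSup_nonneg <| by
    rintro _ ⟨s, t, u, -, -, -, -, -, -, rfl⟩
    exact le_min (abs_nonneg _) (abs_nonneg _)

lemma min_abs_sub_le_cadlagMod {a b δ : ℝ} {x : ℝ → ℝ}
    (hx : BddAbove ((fun t => |x t|) '' Icc a b)) {s t u : ℝ}
    (hs : s ∈ Icc a b) (ht : t ∈ Icc a b) (hu : u ∈ Icc a b)
    (hst : s ≤ t) (htu : t ≤ u) (hus : u - s ≤ δ) :
    min |x t - x s| |x u - x t| ≤ cadlagMod a b δ x := by
  obtain ⟨C, hC⟩ := hx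
  refine le_csSup ⟨C + C, ?_⟩ ⟨s, t, u, hs, ht, hu, hst, htu, hus, rfl⟩
  rintro _ ⟨s, t, u, hs, ht, -, -, -, -, rfl⟩
  calc min |x t - x s| |x u - x t| ≤ |x t - x s| := min_le_left _ _
    _ ≤ |x t| + |x s| := abs_sub _ _
    _ ≤ C + C := add_le_add (hC ⟨t, ht, rfl⟩) (hC ⟨s, hs, rfl⟩)

lemma sSup_abs_le_cadlagMod_add_iSup {a b δ : ℝ} {m : ℕ} {ts : Fin m → ℝ}
    (hts : ∀ k, ts k ∈ Icc a b)
    (hnet : ∀ t ∈ Icc a b, ∃ i j, ts i ≤ t ∧ t ≤ ts j ∧ ts j - ts i ≤ δ) (x : ℝ → ℝ) :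
    sSup ((fun t => |x t|) '' Icc a b) ≤ cadlagMod a b δ x + ⨆ k, |x (ts k)| := by
  have hW := cadlagMod_nonneg a b δ x
  have hM : 0 ≤ ⨆ k, |x (ts k)| := Real.iSup_nonneg fun _ => abs_nonneg _
  by_cases hx : BddAbove ((fun t => |x t|) '' Icc a b)
  · refine Real.sSup_le ?_ (add_nonneg hW hM)
    rintro _ ⟨t, ht, rfl⟩
    obtain ⟨i, j, hit, htj, hji⟩ := hnet t ht
    have hbdd := Finite.bddAbove_range fun k => |x (ts k)|
    calc |x t| ≤ min |x t - x (ts i)| |x (ts j) - x t| + ⨆ k, |x (ts k)| :=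
          abs_le_min_abs_sub_add (le_ciSup hbdd i) (le_ciSup hbdd j)
      _ ≤ cadlagMod a b δ x + ⨆ k, |x (ts k)| := by
          gcongr
          exact min_abs_sub_le_cadlagMod hx (hts i) ht (hts j) hit htj hji
  · rw [Real.sSup_of_not_bddAbove hx]
    exact add_nonneg hW hM

/-- For each `δ > 0` there are finitely many points `t_1 < ⋯ < t_m` in `[a,b]` such that every
càdlàg `x` satisfies `‖x‖_∞ ≤ w''(x,δ) + max_k |x (t_k)|`. -/
theorem stmt12 (a b : ℝ) (hab : a < b) (δ : ℝ) (hδ : 0 < δ) :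
    ∃ (m : ℕ) (ts : Fin m → ℝ), 0 < m ∧ StrictMono ts ∧ (∀ k, ts k ∈ Set.Icc a b) ∧
      ∀ x : ℝ → ℝ, CadlagOn a b x →
        sSup ((fun t => |x t|) '' Set.Icc a b) ≤ cadlagMod a b δ x + ⨆ k, |x (ts k)| := by
  obtain ⟨m, ts, hm, hmono, hts, hnet⟩ := exists_grid_Icc hab hδ
  exact ⟨m, ts, hm, hmono, hts, fun x _ => sSup_abs_le_cadlagMod_add_iSup hts hnet x⟩
end
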